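/- arXiv:1101.4553 — 4 statements merged into one kernel-verified Lean document; each statement's English description precedes it below -/
import Mathlib

section
/- Let (n_k)_{k≥0} be a strictly increasing sequence of positive integers such that n_{k+1}/n_k → ∞ as k → ∞. Then there exists a compact perfect subset K of 𝕋 with the following two properties: (i) for every ε > 0 there exists a compact perfect subset K_ε of K such that sup_{k≥0} |λ^{n_k} − 1| ≤ ε for every λ ∈ K_ε; (ii) λ^{n_k} tends to 1 uniformly on K, i.e. sup_{λ∈K} |λ^{n_k} − 1| → 0 as k → ∞. -/
/-!
Passing to a tail of `n` we may assume `N (k + 1) ≥ 100 * N k`. To a digit sequence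
`ε : ℕ → Bool` attach `t(ε) = lim t_k`, where `t_{k+1}` is `t_k` rounded to the lattice
`(N k)⁻¹ ℤ` and then shifted by `2 / N (k + 1)` if `ε k` holds. Then `N j * t(ε)` is within
`(8/3) N j / N (j + 1)` of an integer, the shifts keep distinct sequences apart, and
`ε ↦ exp (2πi t(ε))` embeds the Cantor space into the circle. For `m` large, the image of the
cylinder `{ε | ε i = false for i ≤ m}` serves as `K_δ`: on it `|t(ε)| ≤ (2/3) / N (m + 1)`, which
also controls the finitely many powers `n k ≤ N m`.
-/

open Filter Topology Set PiNat Real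

theorem Preperfect.image {X Y : Type*} [TopologicalSpace X] [TopologicalSpace Y] {C : Set X}
    (hC : Preperfect C) {f : X → Y} (hf : Continuous f) (hinj : Function.Injective f) :
    Preperfect (f '' C) := by
  rw [preperfect_iff_nhds] at hC ⊢
  rintro _ ⟨x, hx, rfl⟩ U hU
  obtain ⟨y, ⟨hyU, hyC⟩, hyx⟩ := hC x hx _ (hf.continuousAt hU)
  exact ⟨f y, ⟨hyU, mem_image_of_mem f hyC⟩, hinj.ne hyx⟩

theorem PiNat.perfect_cylinder {E : ℕ → Type*} [∀ n, TopologicalSpace (E n)]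
    [∀ n, DiscreteTopology (E n)] [∀ n, Nontrivial (E n)] (x : ∀ n, E n) (m : ℕ) :
    Perfect (cylinder x m) := by
  refine ⟨?_, ?_⟩
  · rw [cylinder_eq_pi]
    exact isClosed_set_pi fun i _ => isClosed_discrete _
  rw [preperfect_iff_nhds]
  intro y hy U hU
  obtain ⟨_, ⟨z, n, rfl⟩, hyz, hzU⟩ := (isTopologicalBasis_cylinders E).mem_nhds_iff.mp hU
  rw [mem_cylinder_iff_eq] at hy hyz
  obtain ⟨e, he⟩ := exists_ne (y (max m n))
  refine ⟨Function.update y (max m n) e, ⟨hzU ?_, ?_⟩,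
    fun h => he (by simpa using congr_fun h (max m n))⟩
  · rw [← hyz]; exact cylinder_anti y (le_max_right m n) (update_mem_cylinder _ _ _)
  · rw [← hy]; exact cylinder_anti y (le_max_left m n) (update_mem_cylinder _ _ _)

theorem norm_exp_two_pi_mul_I_sub_one_le (x : ℝ) (A : ℤ) :
    ‖Complex.exp (2 * π * x * Complex.I) - 1‖ ≤ 2 * π * |x - A| := by
  have hperiodic :
      Complex.exp (2 * π * x * Complex.I) = Complex.exp (Complex.I * ↑(2 * π * (x - A))) := by
    rw [← mul_one (Complex.exp (Complex.I * _)), ← Complex.exp_int_mul_two_pi_mul_I A,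
      ← Complex.exp_add]
    push_cast; ring_nf
  rw [hperiodic]
  refine Real.norm_exp_I_mul_ofReal_sub_one_le.trans_eq ?_
  rw [Real.norm_eq_abs, abs_mul, abs_of_pos Real.two_pi_pos]

namespace Lacunary

structure IsLacunary (N : ℕ → ℕ) : Prop where
  pos : ∀ k, 0 < N k
  hundred_mul_le : ∀ k, 100 * N k ≤ N (k + 1)

noncomputable def approx (N : ℕ → ℕ) (ε : ℕ → Bool) : ℕ → ℝ
  | 0 => 0
  | k + 1 => round (N k * approx N ε k) / N k + if ε k then (2 : ℝ) / N (k + 1) else 0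

noncomputable def point (N : ℕ → ℕ) (ε : ℕ → Bool) : ℝ :=
  limUnder atTop (approx N ε)

variable {N : ℕ → ℕ}

theorem approx_eq_of_mem_cylinder {ε ε' : ℕ → Bool} {m : ℕ} (h : ε' ∈ cylinder ε m) :
    approx N ε' m = approx N ε m := by
  induction m with
  | zero => rfl
  | succ m ih =>
    simp only [approx, ih (cylinder_anti ε m.le_succ h), h m m.lt_succ_self]

theorem approx_eq_zero_of_mem_cylinder {ε : ℕ → Bool} {m : ℕ}
    (h : ε ∈ cylinder (fun _ => false) m) : approx N ε m = 0 := by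
  rw [approx_eq_of_mem_cylinder h]
  induction m with
  | zero => rfl
  | succ m ih => simp [approx, ih (cylinder_anti _ m.le_succ h)]

theorem IsLacunary.mul_pow_le (hN : IsLacunary N) (m i : ℕ) : N m * 100 ^ i ≤ N (m + i) := by
  induction i with
  | zero => simp
  | succ i ih =>
    rw [pow_succ, ← mul_assoc, ← add_assoc]
    exact (Nat.mul_le_mul_right 100 ih).trans (by linarith [hN.hundred_mul_le (m + i)])

theorem IsLacunary.inv_le_inv_mul_pow (hN : IsLacunary N) (m i : ℕ) :
    (N (m + i) : ℝ)⁻¹ ≤ (N m : ℝ)⁻¹ * 100⁻¹ ^ i := by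
  have hm : (0 : ℝ) < N m := by exact_mod_cast hN.pos m
  rw [inv_pow, ← mul_inv, inv_le_inv₀ (by exact_mod_cast hN.pos _) (by positivity)]
  exact_mod_cast hN.mul_pow_le m i

theorem IsLacunary.dist_approx_succ_le (hN : IsLacunary N) (ε : ℕ → Bool) (k : ℕ) :
    dist (approx N ε k) (approx N ε (k + 1)) ≤ (3 / 5 : ℝ) / N k := by
  have hk : (0 : ℝ) < N k := by exact_mod_cast hN.pos k
  have hround : |round (N k * approx N ε k) / N k - approx N ε k| ≤ 1 / 2 / N k := by
    rw [le_div_iff₀ hk, ← abs_of_pos hk, ← abs_mul, abs_of_pos hk, sub_mul,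
      div_mul_cancel₀ _ hk.ne', mul_comm, abs_sub_comm]
    exact abs_sub_round _
  have hshift : |(if ε k then 2 / N (k + 1) else 0 : ℝ)| ≤ 1 / 50 / N k := by
    have : (100 : ℝ) * N k ≤ N (k + 1) := by exact_mod_cast hN.hundred_mul_le k
    have : (0 : ℝ) < N (k + 1) := by exact_mod_cast hN.pos (k + 1)
    split_ifs
    · rw [abs_of_pos (by positivity), div_le_div_iff₀ (by positivity) hk]
      linarith
    · rw [abs_zero]; positivity
  rw [dist_comm, Real.dist_eq, approx, add_sub_right_comm]
  calc _ ≤ (1 / 2 : ℝ) / N k + 1 / 50 / N k := (abs_add_le _ _).trans (add_le_add hround hshift)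
    _ ≤ 3 / 5 / N k := by rw [← add_div]; gcongr; norm_num

theorem IsLacunary.dist_approx_add_le (hN : IsLacunary N) (ε : ℕ → Bool) (m i : ℕ) :
    dist (approx N ε (m + i)) (approx N ε (m + i + 1)) ≤ 3 / 5 / N m * 100⁻¹ ^ i := by
  refine (hN.dist_approx_succ_le ε (m + i)).trans ?_
  calc (3 / 5 : ℝ) / N (m + i) = 3 / 5 * (N (m + i) : ℝ)⁻¹ := div_eq_mul_inv _ _
    _ ≤ 3 / 5 * ((N m : ℝ)⁻¹ * 100⁻¹ ^ i) := by gcongr; exact hN.inv_le_inv_mul_pow m i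
    _ = 3 / 5 / N m * 100⁻¹ ^ i := by ring

theorem IsLacunary.tendsto_approx_point (hN : IsLacunary N) (ε : ℕ → Bool) :
    Tendsto (approx N ε) atTop (𝓝 (point N ε)) := by
  refine CauchySeq.tendsto_limUnder
    (cauchySeq_of_le_geometric 100⁻¹ (3 / 5 / N 0) (by norm_num) fun i => ?_)
  simpa using hN.dist_approx_add_le ε 0 i

theorem IsLacunary.dist_approx_point_le (hN : IsLacunary N) (ε : ℕ → Bool) (m : ℕ) :
    dist (approx N ε m) (point N ε) ≤ 2 / 3 / N m := by
  have hlim : Tendsto (fun i => approx N ε (m + i)) atTop (𝓝 (point N ε)) :=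
    (tendsto_add_atTop_iff_nat m).mpr (hN.tendsto_approx_point ε) |>.congr fun i => by rw [add_comm]
  refine (dist_le_of_le_geometric_of_tendsto₀ _ _ (by norm_num)
    (hN.dist_approx_add_le ε m) hlim).trans ?_
  have hm : (0 : ℝ) < N m := by exact_mod_cast hN.pos m
  rw [div_div, div_le_div_iff₀ (by positivity) hm]
  nlinarith

theorem IsLacunary.tendsto_atTop (hN : IsLacunary N) : Tendsto N atTop atTop :=
  tendsto_atTop_mono (fun m => (Nat.lt_pow_self (by norm_num : 1 < 100)).le.trans
    ((Nat.le_mul_of_pos_left _ (hN.pos 0)).trans (by simpa using hN.mul_pow_le 0 m)))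
    tendsto_id

theorem IsLacunary.dist_point_le_of_mem_cylinder (hN : IsLacunary N) {ε ε' : ℕ → Bool} {m : ℕ}
    (h : ε' ∈ cylinder ε m) : dist (point N ε') (point N ε) ≤ 4 / 3 / N m := by
  have h₁ := hN.dist_approx_point_le ε' m
  have h₂ := hN.dist_approx_point_le ε m
  rw [approx_eq_of_mem_cylinder h] at h₁
  calc dist (point N ε') (point N ε)
        ≤ dist (approx N ε m) (point N ε') + dist (approx N ε m) (point N ε) :=
        dist_triangle_left _ _ _
    _ ≤ 2 / 3 / N m + 2 / 3 / N m := add_le_add h₁ h₂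
    _ = 4 / 3 / N m := by ring

theorem IsLacunary.continuous_point (hN : IsLacunary N) : Continuous (point N) := by
  refine continuous_iff_continuousAt.mpr fun ε => Metric.tendsto_nhds.mpr fun δ hδ => ?_
  have hsmall : Tendsto (fun m => 4 / 3 / (N m : ℝ)) atTop (𝓝 0) :=
    tendsto_const_nhds.div_atTop (tendsto_natCast_atTop_atTop.comp hN.tendsto_atTop)
  obtain ⟨m, hm⟩ := (hsmall.eventually (gt_mem_nhds hδ)).exists
  filter_upwards [(isOpen_cylinder _ ε m).mem_nhds (self_mem_cylinder ε m)] with ε' hε'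
  exact (hN.dist_point_le_of_mem_cylinder hε').trans_lt hm

theorem abs_approx_succ_sub_approx_succ {ε ε' : ℕ → Bool} {m : ℕ} (h : ε' ∈ cylinder ε m)
    (hm : ε m ≠ ε' m) : |approx N ε (m + 1) - approx N ε' (m + 1)| = 2 / N (m + 1) := by
  rw [approx, approx, approx_eq_of_mem_cylinder h]
  cases hε : ε m <;> cases hε' : ε' m <;> simp_all [abs_div]

theorem IsLacunary.point_sub_point_ne_intCast (hN : IsLacunary N) {ε ε' : ℕ → Bool}
    (hne : ε ≠ ε') (A : ℤ) : point N ε - point N ε' ≠ A := by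
  set m := firstDiff ε' ε
  have hgap : |approx N ε (m + 1) - approx N ε' (m + 1)| = 2 / N (m + 1) :=
    abs_approx_succ_sub_approx_succ (mem_cylinder_firstDiff ε' ε)
      (apply_firstDiff_ne hne.symm).symm
  have h₁ := hN.dist_approx_point_le ε (m + 1)
  have h₂ := hN.dist_approx_point_le ε' (m + 1)
  rw [Real.dist_eq] at h₁ h₂
  have hN1 : (100 : ℝ) ≤ N (m + 1) := by
    exact_mod_cast (Nat.le_mul_of_pos_right 100 (hN.pos m)).trans (hN.hundred_mul_le m)
  have hx : (N (m + 1) : ℝ)⁻¹ ≤ 1 / 100 := by rw [one_div]; exact inv_anti₀ (by norm_num) hN1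
  have hx₀ : (0 : ℝ) < (N (m + 1) : ℝ)⁻¹ := by positivity
  simp only [div_eq_mul_inv (_ : ℝ) (N (m + 1) : ℝ)] at h₁ h₂ hgap
  have hclose : |(point N ε - point N ε') - (approx N ε (m + 1) - approx N ε' (m + 1))|
      ≤ 4 / 3 * (N (m + 1) : ℝ)⁻¹ := by
    rw [show (point N ε - point N ε') - (approx N ε (m + 1) - approx N ε' (m + 1))
      = (approx N ε' (m + 1) - point N ε') - (approx N ε (m + 1) - point N ε) by ring]
    exact (abs_sub _ _).trans (by linarith)
  intro hA
  rw [hA] at hclose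
  have h := abs_le.mp ((abs_abs_sub_abs_le_abs_sub _ _).trans hclose)
  have hA0 : A = 0 := Int.abs_lt_one_iff.mp (by exact_mod_cast (by linarith : |(A : ℝ)| < 1))
  rw [hA0, Int.cast_zero, abs_zero] at h
  linarith

theorem IsLacunary.abs_mul_point_sub_round_le (hN : IsLacunary N) (ε : ℕ → Bool) (j : ℕ) :
    |N j * point N ε - round (N j * approx N ε j)| ≤ 8 / 3 * (N j / N (j + 1)) := by
  have hj : (0 : ℝ) < N j := by exact_mod_cast hN.pos j
  have hj₁ : (0 : ℝ) < N (j + 1) := by exact_mod_cast hN.pos (j + 1)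
  have htail := hN.dist_approx_point_le ε (j + 1)
  rw [dist_comm, Real.dist_eq] at htail
  have hshift : |N j * (if ε j then (2 : ℝ) / N (j + 1) else 0)| ≤ 2 * N j / N (j + 1) := by
    split_ifs
    · rw [abs_of_pos (by positivity)]; exact le_of_eq (by ring)
    · simp only [mul_zero, abs_zero]; positivity
  have hsplit : N j * point N ε - round (N j * approx N ε j)
      = N j * (point N ε - approx N ε (j + 1))
        + N j * (if ε j then (2 : ℝ) / N (j + 1) else 0) := by
    rw [approx]; field_simp; ring
  rw [hsplit]
  calc _ ≤ (N j : ℝ) * (2 / 3 / N (j + 1)) + 2 * N j / N (j + 1) := by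
        refine (abs_add_le _ _).trans (add_le_add ?_ hshift)
        rw [abs_mul, abs_of_pos hj]
        gcongr
    _ = 8 / 3 * (N j / N (j + 1)) := by ring

theorem IsLacunary.abs_point_le_of_mem_cylinder (hN : IsLacunary N) {ε : ℕ → Bool} {m : ℕ}
    (h : ε ∈ cylinder (fun _ => false) m) : |point N ε| ≤ 2 / 3 / N m := by
  simpa [approx_eq_zero_of_mem_cylinder h, Real.dist_eq] using hN.dist_approx_point_le ε m

noncomputable def circlePoint (N : ℕ → ℕ) (ε : ℕ → Bool) : ℂ :=
  Complex.exp (2 * π * point N ε * Complex.I)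

theorem norm_circlePoint (ε : ℕ → Bool) : ‖circlePoint N ε‖ = 1 := by
  rw [circlePoint, ← Complex.ofReal_ofNat, ← Complex.ofReal_mul, ← Complex.ofReal_mul,
    Complex.norm_exp_ofReal_mul_I]

theorem circlePoint_pow (ε : ℕ → Bool) (p : ℕ) :
    circlePoint N ε ^ p = Complex.exp (2 * π * (p * point N ε : ℝ) * Complex.I) := by
  rw [circlePoint, ← Complex.exp_nat_mul]; push_cast; ring_nf

theorem IsLacunary.continuous_circlePoint (hN : IsLacunary N) : Continuous (circlePoint N) := by
  have := hN.continuous_point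
  unfold circlePoint; fun_prop

theorem IsLacunary.injective_circlePoint (hN : IsLacunary N) :
    Function.Injective (circlePoint N) := by
  intro ε ε' h
  by_contra hne
  obtain ⟨A, hA⟩ := Complex.exp_eq_exp_iff_exists_int.mp h
  refine hN.point_sub_point_ne_intCast hne A ?_
  have : ((point N ε - point N ε' - A : ℝ) : ℂ) * (2 * π * Complex.I) = 0 := by
    push_cast; linear_combination hA
  exact sub_eq_zero.mp (Complex.ofReal_eq_zero.mp
    ((mul_eq_zero.mp this).resolve_right (by simp [Real.pi_ne_zero])))

theorem IsLacunary.norm_circlePoint_pow_sub_one_le (hN : IsLacunary N) (ε : ℕ → Bool) (j : ℕ) :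
    ‖circlePoint N ε ^ N j - 1‖ ≤ 2 * π * (8 / 3 * (N j / N (j + 1))) := by
  rw [circlePoint_pow]
  exact (norm_exp_two_pi_mul_I_sub_one_le _ _).trans
    (by gcongr; exact hN.abs_mul_point_sub_round_le ε j)

theorem IsLacunary.norm_circlePoint_pow_sub_one_le_of_le (hN : IsLacunary N) {ε : ℕ → Bool}
    {m p : ℕ} (hε : ε ∈ cylinder (fun _ => false) (m + 1)) (hp : p ≤ N m) :
    ‖circlePoint N ε ^ p - 1‖ ≤ 2 * π * (2 / 3 * (N m / N (m + 1))) := by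
  rw [circlePoint_pow]
  refine (norm_exp_two_pi_mul_I_sub_one_le _ 0).trans ?_
  gcongr
  rw [Int.cast_zero, sub_zero, abs_mul, Nat.abs_cast]
  calc (p : ℝ) * |point N ε| ≤ N m * (2 / 3 / N (m + 1)) :=
        mul_le_mul (by exact_mod_cast hp) (hN.abs_point_le_of_mem_cylinder hε) (abs_nonneg _)
          (Nat.cast_nonneg _)
    _ = 2 / 3 * (N m / N (m + 1)) := by ring

theorem IsLacunary.isCompact_image_cylinder (hN : IsLacunary N) (x : ℕ → Bool) (m : ℕ) :
    IsCompact (circlePoint N '' cylinder x m) :=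
  (perfect_cylinder x m).closed.isCompact.image hN.continuous_circlePoint

theorem IsLacunary.perfect_image_cylinder (hN : IsLacunary N) (x : ℕ → Bool) (m : ℕ) :
    Perfect (circlePoint N '' cylinder x m) :=
  ⟨(hN.isCompact_image_cylinder x m).isClosed,
    (perfect_cylinder x m).acc.image hN.continuous_circlePoint hN.injective_circlePoint⟩

end Lacunary

open Lacunary

section Shift

variable {n : ℕ → ℕ}

theorem exists_isLacunary_add (hpos : ∀ k, 0 < n k)
    (hratio : Tendsto (fun k => (n (k + 1) : ℝ) / n k) atTop atTop) :
    ∃ K₀, IsLacunary (fun j => n (j + K₀)) ∧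
      Tendsto (fun j => (n (j + K₀) : ℝ) / n (j + 1 + K₀)) atTop (𝓝 0) := by
  obtain ⟨K₀, hK₀⟩ := eventually_atTop.mp (hratio.eventually_ge_atTop 100)
  refine ⟨K₀, ⟨fun j => hpos _, fun j => ?_⟩, ?_⟩
  · have h := hK₀ (j + K₀) le_add_self
    rw [le_div_iff₀ (by exact_mod_cast hpos _)] at h
    simpa [add_right_comm j 1 K₀] using
      (by exact_mod_cast h : 100 * n (j + K₀) ≤ n (j + K₀ + 1))
  · simpa [add_right_comm _ 1 K₀] using
      (tendsto_add_atTop_iff_nat K₀).mpr hratio.inv_tendsto_atTop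

variable {K₀ : ℕ}

theorem exists_forall_norm_circlePoint_pow_sub_one_le (hmono : Monotone n)
    (hN : IsLacunary fun j => n (j + K₀))
    (hratio₀ : Tendsto (fun j => (n (j + K₀) : ℝ) / n (j + 1 + K₀)) atTop (𝓝 0))
    {δ : ℝ} (hδ : 0 < δ) :
    ∃ J, ∀ ε ∈ cylinder (fun _ => false) (J + 1), ∀ k,
      ‖circlePoint (fun j => n (j + K₀)) ε ^ n k - 1‖ ≤ δ := by
  have hbound := (hratio₀.const_mul (8 / 3)).const_mul (2 * π)
  rw [mul_zero, mul_zero] at hbound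
  obtain ⟨J, hJ⟩ := eventually_atTop.mp (hbound.eventually (ge_mem_nhds hδ))
  refine ⟨J, fun ε hε k => ?_⟩
  rcases le_or_gt k (J + K₀) with hk | hk
  · refine (hN.norm_circlePoint_pow_sub_one_le_of_le hε (hmono hk)).trans
      (le_trans ?_ (hJ J le_rfl))
    gcongr
    norm_num
  · obtain ⟨j, rfl⟩ : ∃ j, k = j + K₀ := ⟨k - K₀, by omega⟩
    exact (hN.norm_circlePoint_pow_sub_one_le ε j).trans (hJ j (by omega))

theorem tendstoUniformlyOn_range_circlePoint (hN : IsLacunary fun j => n (j + K₀))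
    (hratio₀ : Tendsto (fun j => (n (j + K₀) : ℝ) / n (j + 1 + K₀)) atTop (𝓝 0)) :
    TendstoUniformlyOn (fun k (z : ℂ) => z ^ n k) (fun _ => 1) atTop
      (range (circlePoint fun j => n (j + K₀))) := by
  have hbound := (hratio₀.const_mul (8 / 3)).const_mul (2 * π)
  rw [mul_zero, mul_zero] at hbound
  rw [Metric.tendstoUniformlyOn_iff]
  intro δ hδ
  filter_upwards [(tendsto_sub_atTop_nat K₀).eventually (hbound.eventually (gt_mem_nhds hδ)),
    eventually_ge_atTop K₀] with k hk hkK₀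
  rintro _ ⟨ε, rfl⟩
  obtain ⟨j, rfl⟩ : ∃ j, k = j + K₀ := ⟨k - K₀, by omega⟩
  rw [dist_comm, dist_eq_norm]
  exact (hN.norm_circlePoint_pow_sub_one_le ε j).trans_lt (by simpa using hk)

end Shift

/-- Proposition 3.4: if `n_{k+1}/n_k → ∞`, there is a nonempty compact perfect subset `K`
of the unit circle such that (i) for every `ε > 0` there is a nonempty compact perfect
subset `K_ε` of `K` with `sup_k |λ^{n_k} - 1| ≤ ε` for every `λ ∈ K_ε`, and
(ii) `λ^{n_k} → 1` uniformly on `K`. -/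
theorem exists_perfect_set_of_ratio_tendsto_atTop
    (n : ℕ → ℕ) (hmono : StrictMono n) (hpos : ∀ k, 0 < n k)
    (hratio : Tendsto (fun k => (n (k + 1) : ℝ) / (n k : ℝ)) atTop atTop) :
    ∃ K : Set ℂ, K ⊆ {z : ℂ | ‖z‖ = 1} ∧ IsCompact K ∧ Perfect K ∧ K.Nonempty ∧
      (∀ ε > (0 : ℝ), ∃ Kε : Set ℂ, Kε ⊆ K ∧ IsCompact Kε ∧ Perfect Kε ∧ Kε.Nonempty ∧
        ∀ z ∈ Kε, ∀ k, ‖z ^ (n k) - 1‖ ≤ ε) ∧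
      TendstoUniformlyOn (fun k (z : ℂ) => z ^ (n k)) (fun _ => 1) atTop K := by
  obtain ⟨K₀, hN, hratio₀⟩ := exists_isLacunary_add hpos hratio
  have hnonempty (m : ℕ) :
      (circlePoint (fun j => n (j + K₀)) '' cylinder (fun _ => false) m).Nonempty :=
    (Set.nonempty_of_mem (self_mem_cylinder _ m)).image _
  refine ⟨circlePoint _ '' cylinder (fun _ => false) 0, ?_, hN.isCompact_image_cylinder _ 0,
    hN.perfect_image_cylinder _ 0, hnonempty 0, fun δ hδ => ?_,
    (tendstoUniformlyOn_range_circlePoint hN hratio₀).mono (image_subset_range _ _)⟩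
  · rintro _ ⟨ε, -, rfl⟩
    exact norm_circlePoint ε
  · obtain ⟨J, hJ⟩ := exists_forall_norm_circlePoint_pow_sub_one_le hmono.monotone hN hratio₀ hδ
    exact ⟨_, image_mono (cylinder_anti _ (Nat.zero_le (J + 1))),
      hN.isCompact_image_cylinder _ _, hN.perfect_image_cylinder _ _, hnonempty _,
      fun _ ⟨ε, hε, hz⟩ => hz ▸ hJ ε hε⟩
end

section
/- Let (n_k)_{k≥0} be a strictly increasing sequence of positive integers. The following assertions are equivalent: (i) there exists a compact perfect subset K of 𝕋 such that λ^{n_k} tends to 1 uniformly on K; (ii) there exists a compact perfect subset K of 𝕋 such that λ^{n_k} tends to 1 uniformly on K and, for every ε > 0, there exists λ ∈ K \ {1} with sup_{k≥0} |λ^{n_k} − 1| ≤ ε. -/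
open Filter Topology

/-! Rotating a set `K` on which `λ ^ n_k → 1` uniformly by `z₀⁻¹` for some `z₀ ∈ K` keeps all
these properties (since `(z₀⁻¹ w) ^ m = w ^ m / z₀ ^ m` with `‖z₀ ^ m‖ = 1`) and puts `1` into the
set. As `1` is an accumulation point of the rotated set, it contains points `z ≠ 1` close enough to
`1` that the finitely many `z ^ n_k` not yet controlled by uniform convergence are close to `1`
by continuity. -/

theorem Perfect.image_homeomorph {X Y : Type*} [TopologicalSpace X] [TopologicalSpace Y]
    {C : Set X} (hC : Perfect C) (e : X ≃ₜ Y) : Perfect (e '' C) := by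
  refine ⟨e.isClosed_image.mpr hC.closed, ?_⟩
  rintro _ ⟨x, hx, rfl⟩
  simpa only [map_principal] using (hC.acc x hx).map e.continuous.continuousAt e.injective

theorem norm_mul_inv_sub_one_le {𝕜 : Type*} [NormedField 𝕜] (a : 𝕜) {b : 𝕜} (hb : ‖b‖ = 1) :
    ‖a * b⁻¹ - 1‖ ≤ ‖a - 1‖ + ‖b - 1‖ := by
  have hb₀ : b ≠ 0 := norm_ne_zero_iff.mp (by rw [hb]; exact one_ne_zero)
  calc ‖a * b⁻¹ - 1‖ = ‖(a - 1 - (b - 1)) * b⁻¹‖ := by congr 1; field_simp; ring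
    _ = ‖a - 1 - (b - 1)‖ := by rw [norm_mul, norm_inv, hb, inv_one, mul_one]
    _ ≤ ‖a - 1‖ + ‖b - 1‖ := norm_sub_le _ _

theorem TendstoUniformlyOn.pow_image_mul_inv {𝕜 ι : Type*} [NormedField 𝕜] {l : Filter ι}
    {n : ι → ℕ} {K : Set 𝕜} {z₀ : 𝕜} (hz₀ : z₀ ∈ K) (hz₀_norm : ‖z₀‖ = 1)
    (h : TendstoUniformlyOn (fun k (z : 𝕜) => z ^ n k) (fun _ => 1) l K) :
    TendstoUniformlyOn (fun k (z : 𝕜) => z ^ n k) (fun _ => 1) l ((z₀⁻¹ * ·) '' K) := by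
  rw [Metric.tendstoUniformlyOn_iff] at h ⊢
  intro ε hε
  filter_upwards [h (ε / 2) (half_pos hε)] with k hk
  rintro _ ⟨w, hw, rfl⟩
  have hw_close := hk w hw
  have hz₀_close := hk z₀ hz₀
  rw [dist_comm, dist_eq_norm] at hw_close hz₀_close ⊢
  calc ‖(z₀⁻¹ * w) ^ n k - 1‖ = ‖w ^ n k * (z₀ ^ n k)⁻¹ - 1‖ := by rw [mul_pow, inv_pow, mul_comm]
    _ ≤ ‖w ^ n k - 1‖ + ‖z₀ ^ n k - 1‖ :=
      norm_mul_inv_sub_one_le _ (by rw [norm_pow, hz₀_norm, one_pow])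
    _ < ε := by linarith

theorem AccPt.exists_ne_forall_dist_le_of_tendstoUniformlyOn {α β : Type*} [TopologicalSpace α]
    [PseudoMetricSpace β] {F : ℕ → α → β} {c : β} {K : Set α} {x : α} (hx : AccPt x (𝓟 K))
    (hcont : ∀ k, ContinuousAt (F k) x) (hFx : ∀ k, F k x = c)
    (h : TendstoUniformlyOn F (fun _ => c) atTop K) {ε : ℝ} (hε : 0 < ε) :
    ∃ z ∈ K, z ≠ x ∧ ∀ k, dist (F k z) c ≤ ε := by
  obtain ⟨N, hN⟩ := eventually_atTop.mp (Metric.tendstoUniformlyOn_iff.mp h ε hε)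
  have h_near : ∀ᶠ z in 𝓝 x, ∀ k ∈ Finset.range N, dist (F k z) c ≤ ε := by
    refine (eventually_all_finset _).mpr fun k _ => ?_
    simpa only [hFx k] using (hcont k).eventually (Metric.closedBall_mem_nhds (F k x) hε)
  obtain ⟨z, ⟨hz_near, hzK⟩, hzx⟩ := accPt_iff_nhds.mp hx _ h_near
  refine ⟨z, hzK, hzx, fun k => ?_⟩
  rcases lt_or_ge k N with hk | hk
  · exact hz_near k (Finset.mem_range.mpr hk)
  · rw [dist_comm]
    exact (hN k hk z hzK).le

theorem exists_perfect_uniform_iff_exists_perfect_uniform_with_small_points_general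
    (n : ℕ → ℕ) :
    (∃ K : Set ℂ, K ⊆ {z : ℂ | ‖z‖ = 1} ∧ IsCompact K ∧ Perfect K ∧ K.Nonempty ∧
      TendstoUniformlyOn (fun k (z : ℂ) => z ^ (n k)) (fun _ => 1) atTop K)
    ↔
    (∃ K : Set ℂ, K ⊆ {z : ℂ | ‖z‖ = 1} ∧ IsCompact K ∧ Perfect K ∧ K.Nonempty ∧
      TendstoUniformlyOn (fun k (z : ℂ) => z ^ (n k)) (fun _ => 1) atTop K ∧
      ∀ ε > (0 : ℝ), ∃ z ∈ K, z ≠ 1 ∧ ∀ k, ‖z ^ (n k) - 1‖ ≤ ε) := by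
  refine ⟨?_, fun ⟨K, hsub, hcomp, hperf, hne, hunif, _⟩ => ⟨K, hsub, hcomp, hperf, hne, hunif⟩⟩
  rintro ⟨K, hsub, hcomp, hperf, ⟨z₀, hz₀⟩, hunif⟩
  have hz₀_norm : ‖z₀‖ = 1 := hsub hz₀
  have hz₀_ne : z₀ ≠ 0 := norm_ne_zero_iff.mp (by rw [hz₀_norm]; exact one_ne_zero)
  let e := Homeomorph.mulLeft₀ z₀⁻¹ (inv_ne_zero hz₀_ne)
  have h_one : (1 : ℂ) ∈ e '' K := ⟨z₀, hz₀, inv_mul_cancel₀ hz₀_ne⟩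
  have h_sub : e '' K ⊆ {z : ℂ | ‖z‖ = 1} := by
    rintro _ ⟨w, hw, rfl⟩
    have hw_norm : ‖w‖ = 1 := hsub hw
    show ‖z₀⁻¹ * w‖ = 1
    rw [norm_mul, norm_inv, hz₀_norm, hw_norm, inv_one, one_mul]
  have h_unif := hunif.pow_image_mul_inv hz₀ hz₀_norm
  refine ⟨e '' K, h_sub, hcomp.image e.continuous, hperf.image_homeomorph e, ⟨1, h_one⟩, h_unif,
    fun ε hε => ?_⟩
  simpa only [dist_eq_norm] using
    ((hperf.image_homeomorph e).acc 1 h_one).exists_ne_forall_dist_le_of_tendstoUniformlyOn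
      (fun k => (continuous_pow (n k)).continuousAt) (fun k => one_pow (n k)) h_unif hε

/-- Fact 3.6: there exists a nonempty compact perfect subset `K` of the unit circle on which
`λ^{n_k} → 1` uniformly if and only if there exists such a set which moreover satisfies:
for every `ε > 0` there is `λ ∈ K \ {1}` with `sup_k |λ^{n_k} - 1| ≤ ε`. -/
theorem exists_perfect_uniform_iff_exists_perfect_uniform_with_small_points
    (n : ℕ → ℕ) (hmono : StrictMono n) (hpos : ∀ k, 0 < n k) :
    (∃ K : Set ℂ, K ⊆ {z : ℂ | ‖z‖ = 1} ∧ IsCompact K ∧ Perfect K ∧ K.Nonempty ∧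
      TendstoUniformlyOn (fun k (z : ℂ) => z ^ (n k)) (fun _ => 1) atTop K)
    ↔
    (∃ K : Set ℂ, K ⊆ {z : ℂ | ‖z‖ = 1} ∧ IsCompact K ∧ Perfect K ∧ K.Nonempty ∧
      TendstoUniformlyOn (fun k (z : ℂ) => z ^ (n k)) (fun _ => 1) atTop K ∧
      ∀ ε > (0 : ℝ), ∃ z ∈ K, z ≠ 1 ∧ ∀ k, ‖z ^ (n k) - 1‖ ≤ ε) :=
  exists_perfect_uniform_iff_exists_perfect_uniform_with_small_points_general n
end

section
/- Let (n_k)_{k≥0} be a strictly increasing sequence of positive integers such that n_k divides n_{k+1} for every k ≥ 0 and limsup_{k→∞} n_{k+1}/n_k = +∞. Then there exists a compact perfect subset K of 𝕋 containing the point 1 such that λ^{n_k} tends to 1 uniformly on K, i.e. sup_{λ∈K} |λ^{n_k} − 1| → 0 as k → ∞. -/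
/-!
Pass to a subsequence `k_j` with `n_{k_j + 1} ≥ 2^{j+1} n_{k_j}`, put `m_j = n_{k_j + 1}` and let
`K` be the set of points `e(∑_{j ∈ S} 1 / m_j)`, `S ⊆ ℕ`, where `e(x) = exp (2πix)`. It is a
continuous image of the Cantor space `ℕ → Bool`, hence compact, and flipping a single digit far
out gives a distinct nearby point, so it is perfect. If `k_{J-1} < i ≤ k_J`, then `m_j ∣ n_i` for
`j < J`, so these digits contribute an integer to `n_i x`, while the others contribute at most
`∑_{j ≥ J} n_{k_j} / m_j ≤ 2^{-J}`; hence `|λ^{n_i} - 1| ≤ 2π 2^{-J}` on `K`.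
-/

open Filter Topology

open Real Set Function FourierTransform

namespace Real

lemma fourierChar_intCast (q : ℤ) : 𝐞 q = 1 := by
  rw [fourierChar_apply', Circle.exp_two_pi_mul_int]

lemma norm_fourierChar_sub_one_le (x : ℝ) : ‖(𝐞 x : ℂ) - 1‖ ≤ 2 * π * |x| := by
  rw [fourierChar_apply, mul_comm]
  simpa [abs_mul, abs_of_pos pi_pos] using norm_exp_I_mul_ofReal_sub_one_le (x := 2 * π * x)

lemma fourierChar_ne_one_of_abs_lt_one {x : ℝ} (h0 : x ≠ 0) (h1 : |x| < 1) : 𝐞 x ≠ 1 := by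
  rw [fourierChar_apply', Ne, Circle.exp_eq_one]
  rintro ⟨q, hq⟩
  have hx : x = q := by nlinarith [pi_pos]
  rw [hx] at h0 h1
  norm_cast at h0 h1
  exact h0 (Int.abs_lt_one_iff.mp h1)

end Real

noncomputable def subsum (a : ℕ → ℝ) (ε : ℕ → Bool) : ℝ := ∑' j, if ε j then a j else 0

section subsum

variable {a : ℕ → ℝ}

lemma summable_ite_of_summable (ha : Summable a) (ε : ℕ → Bool) :
    Summable fun j => if ε j then a j else 0 :=
  ha.abs.of_norm_bounded fun j => by split_ifs <;> simp

lemma continuous_subsum (ha : Summable a) : Continuous (subsum a) := by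
  refine continuous_tsum (fun j => ?_) ha.abs fun j ε => ?_
  · exact (continuous_of_discreteTopology (f := fun b : Bool => if b then a j else 0)).comp
      (continuous_apply j)
  · split_ifs <;> simp

@[simp] lemma subsum_false : subsum a (fun _ => false) = 0 := by simp [subsum]

lemma subsum_nonneg (ha0 : ∀ j, 0 ≤ a j) (ε : ℕ → Bool) : 0 ≤ subsum a ε :=
  tsum_nonneg fun j => by split_ifs <;> simp [ha0]

lemma subsum_le_tsum (ha : Summable a) (ha0 : ∀ j, 0 ≤ a j) (ε : ℕ → Bool) :
    subsum a ε ≤ ∑' j, a j :=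
  (summable_ite_of_summable ha ε).tsum_le_tsum (fun j => by split_ifs <;> simp [ha0]) ha

lemma abs_subsum_update_not_sub (ha : Summable a) (ε : ℕ → Bool) (J : ℕ) :
    |subsum a (update ε J (!ε J)) - subsum a ε| = |a J| := by
  rw [subsum, subsum, ← (summable_ite_of_summable ha _).tsum_sub (summable_ite_of_summable ha ε),
    tsum_eq_single J fun j hj => by rw [update_of_ne hj, sub_self], update_self]
  cases ε J <;> simp

lemma subsum_eq_sum_add_subsum_add (ha : Summable a) (ε : ℕ → Bool) (J : ℕ) :
    subsum a ε = (∑ j ∈ Finset.range J, if ε j then a j else 0) +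
      subsum (fun j => a (j + J)) (fun j => ε (j + J)) :=
  ((summable_ite_of_summable ha ε).sum_add_tsum_nat_add J).symm

lemma norm_fourierChar_subsum_pow_sub_one_le (ha : Summable a) (ha0 : ∀ j, 0 ≤ a j)
    (ε : ℕ → Bool) {N J : ℕ} (hint : ∀ j < J, ∃ q : ℤ, N * a j = q) :
    ‖(𝐞 (subsum a ε) : ℂ) ^ N - 1‖ ≤ 2 * π * (N * ∑' j, a (j + J)) := by
  choose! q hq using hint
  set t := subsum (fun j => a (j + J)) (fun j => ε (j + J))
  have hsplit : N • subsum a ε = ↑(∑ j ∈ Finset.range J, if ε j then q j else 0) + N * t := by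
    rw [subsum_eq_sum_add_subsum_add ha ε J, nsmul_eq_mul, mul_add, Finset.mul_sum]
    push_cast
    congr 1
    refine Finset.sum_congr rfl fun j hj => ?_
    split_ifs
    · exact hq j (Finset.mem_range.mp hj)
    · exact mul_zero _
  have ht0 : 0 ≤ t := subsum_nonneg (fun j => ha0 _) _
  have ht : t ≤ ∑' j, a (j + J) :=
    subsum_le_tsum ((summable_nat_add_iff J).mpr ha) (fun j => ha0 _) _
  calc ‖(𝐞 (subsum a ε) : ℂ) ^ N - 1‖ = ‖(𝐞 (N * t) : ℂ) - 1‖ := by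
        rw [← Circle.coe_pow, ← AddChar.map_nsmul_eq_pow, hsplit, AddChar.map_add_eq_mul,
          fourierChar_intCast, one_mul]
    _ ≤ 2 * π * |N * t| := norm_fourierChar_sub_one_le _
    _ ≤ 2 * π * (N * ∑' j, a (j + J)) := by
        rw [abs_of_nonneg (by positivity)]
        gcongr

lemma fourierChar_subsum_update_ne (ha : Summable a) (ha0 : ∀ j, a j ≠ 0) (ha1 : ∀ j, |a j| < 1)
    (ε : ℕ → Bool) (J : ℕ) :
    (𝐞 (subsum a (update ε J (!ε J))) : ℂ) ≠ 𝐞 (subsum a ε) := by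
  intro h
  have hJ := abs_subsum_update_not_sub ha ε J
  refine fourierChar_ne_one_of_abs_lt_one (x := subsum a (update ε J (!ε J)) - subsum a ε)
    ?_ (hJ ▸ ha1 J) ?_
  · intro h0
    rw [h0, abs_zero, eq_comm, abs_eq_zero] at hJ
    exact ha0 J hJ
  · rw [AddChar.map_sub_eq_div, Circle.coe_inj.mp h, div_self']

end subsum

lemma tendsto_update_atTop_nhds {X : Type*} [TopologicalSpace X] (ε : ℕ → X) (b : ℕ → X) :
    Tendsto (fun J => update ε J (b J)) atTop (𝓝 ε) :=
  tendsto_pi_nhds.2 fun i => tendsto_const_nhds.congr' <|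
    (eventually_ne_atTop i).mono fun _ hJ => (update_of_ne hJ.symm _ _).symm

lemma preperfect_range_of_update_ne {X : Type*} [TopologicalSpace X] {f : (ℕ → Bool) → X}
    (hf : Continuous f) (hne : ∀ ε J, f (update ε J (!ε J)) ≠ f ε) : Preperfect (range f) := by
  rintro _ ⟨ε, rfl⟩
  rw [accPt_iff_frequently]
  exact ((hf.tendsto ε).comp (tendsto_update_atTop_nhds ε fun J => !ε J)).frequently
    (Frequently.of_forall fun J => ⟨hne ε J, mem_range_self _⟩)

lemma frequently_atTop_le_of_forall_exists_le {β : Type*} [LinearOrder β] [NoMaxOrder β]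
    {f : ℕ → β} (hf : ∀ C, ∃ i, C ≤ f i) (C : β) : ∃ᶠ i in atTop, C ≤ f i := by
  by_contra h
  rw [not_frequently] at h
  obtain ⟨B, hB⟩ := (isBoundedUnder_of_eventually_le (h.mono fun _ => le_of_not_ge)).bddAbove_range
  obtain ⟨B', hB'⟩ := exists_gt B
  obtain ⟨i, hi⟩ := hf B'
  exact (hB (mem_range_self i)).not_gt (hB'.trans_le hi)

lemma StrictMono.exists_forall_lt_and_le_apply {k : ℕ → ℕ} (hk : StrictMono k) (i : ℕ) :
    ∃ J, (∀ j < J, k j < i) ∧ i ≤ k J := by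
  classical
  have hex : ∃ J, i ≤ k J := ⟨i, hk.le_apply⟩
  exact ⟨Nat.find hex, fun j hj => lt_of_not_ge (Nat.find_min hex hj), Nat.find_spec hex⟩

lemma dvd_of_le_of_forall_dvd_succ {n : ℕ → ℕ} (hdvd : ∀ i, n i ∣ n (i + 1)) {i j : ℕ}
    (hij : i ≤ j) : n i ∣ n j :=
  Nat.rel_of_forall_rel_succ_of_le_of_le (· ∣ ·) (fun i _ => hdvd i) le_rfl hij

noncomputable def cantorPoint (n k : ℕ → ℕ) (ε : ℕ → Bool) : ℂ :=
  𝐞 (subsum (fun j => (n (k j + 1) : ℝ)⁻¹) ε)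

section cantorPoint

variable {n k : ℕ → ℕ} (hpos : ∀ i, 0 < n i) (hdvd : ∀ i, n i ∣ n (i + 1))
  (hgap : ∀ j, 2 ^ (j + 1) * n (k j) ≤ n (k j + 1))
include hpos hgap

lemma div_le_of_le_of_gap {i j : ℕ} (hi : n i ≤ n (k j)) :
    (n i : ℝ) / n (k j + 1) ≤ 1 / 2 / 2 ^ j := by
  rw [div_le_iff₀ (mod_cast hpos _)]
  calc (n i : ℝ) ≤ n (k j) := mod_cast hi
    _ = 1 / 2 / 2 ^ j * (2 ^ (j + 1) * n (k j)) := by field_simp; ring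
    _ ≤ 1 / 2 / 2 ^ j * n (k j + 1) := by gcongr; exact_mod_cast hgap j

lemma inv_le_of_gap (j : ℕ) : (n (k j + 1) : ℝ)⁻¹ ≤ 1 / 2 / 2 ^ j :=
  calc (n (k j + 1) : ℝ)⁻¹ ≤ n (k j) / n (k j + 1) := by
        rw [inv_eq_one_div]
        gcongr
        exact_mod_cast hpos _
    _ ≤ 1 / 2 / 2 ^ j := div_le_of_le_of_gap hpos hgap le_rfl

lemma summable_inv_of_gap : Summable fun j => (n (k j + 1) : ℝ)⁻¹ :=
  (summable_geometric_two' 1).of_nonneg_of_le (fun _ => by positivity) (inv_le_of_gap hpos hgap)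

lemma continuous_cantorPoint : Continuous (cantorPoint n k) :=
  (continuous_subtype_val.comp continuous_fourierChar).comp
    (continuous_subsum (summable_inv_of_gap hpos hgap))

lemma preperfect_range_cantorPoint : Preperfect (range (cantorPoint n k)) := by
  refine preperfect_range_of_update_ne (continuous_cantorPoint hpos hgap)
    (fourierChar_subsum_update_ne (summable_inv_of_gap hpos hgap)
      (fun j => inv_ne_zero (mod_cast (hpos _).ne')) fun j => ?_)
  rw [abs_of_pos (inv_pos.mpr (mod_cast hpos _))]
  calc (n (k j + 1) : ℝ)⁻¹ ≤ 1 / 2 / 2 ^ j := inv_le_of_gap hpos hgap j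
    _ ≤ 1 / 2 := div_le_self (by norm_num) (one_le_pow₀ one_le_two)
    _ < 1 := by norm_num

include hdvd in
lemma norm_cantorPoint_pow_sub_one_le (hk : StrictMono k) (ε : ℕ → Bool) {i J : ℕ}
    (hlt : ∀ j < J, k j < i) (hle : i ≤ k J) :
    ‖cantorPoint n k ε ^ n i - 1‖ ≤ 2 * π * (1 / 2) ^ J := by
  have hint : ∀ j < J, ∃ q : ℤ, (n i : ℝ) * (n (k j + 1) : ℝ)⁻¹ = q := fun j hj =>
    ⟨(n i / n (k j + 1) : ℕ), by
      rw [Int.cast_natCast, Nat.cast_div (dvd_of_le_of_forall_dvd_succ hdvd (hlt j hj))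
        (mod_cast (hpos _).ne'), div_eq_mul_inv]⟩
  refine (norm_fourierChar_subsum_pow_sub_one_le (summable_inv_of_gap hpos hgap)
    (fun _ => by positivity) ε hint).trans ?_
  gcongr
  rw [← tsum_mul_left, ← tsum_geometric_two' ((1 / 2) ^ J)]
  refine Summable.tsum_le_tsum (fun j => ?_) (((summable_nat_add_iff J).mpr
    (summable_inv_of_gap hpos hgap)).mul_left _) (summable_geometric_two' _)
  have hij : i ≤ k (j + J) := hle.trans (hk.monotone (Nat.le_add_left J j))
  calc (n i : ℝ) * (n (k (j + J) + 1) : ℝ)⁻¹ ≤ 1 / 2 / 2 ^ (j + J) := by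
        rw [← div_eq_mul_inv]
        exact div_le_of_le_of_gap hpos hgap
          (Nat.le_of_dvd (hpos _) (dvd_of_le_of_forall_dvd_succ hdvd hij))
    _ = (1 / 2) ^ J / 2 / 2 ^ j := by rw [one_div_pow]; ring

include hdvd in
lemma tendstoUniformlyOn_pow_range_cantorPoint (hk : StrictMono k) :
    TendstoUniformlyOn (fun i (z : ℂ) => z ^ n i) (fun _ => 1) atTop (range (cantorPoint n k)) := by
  rw [Metric.tendstoUniformlyOn_iff]
  intro δ hδ
  obtain ⟨J₀, hJ₀⟩ := exists_pow_lt_of_lt_one (div_pos hδ two_pi_pos) one_half_lt_one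
  filter_upwards [eventually_gt_atTop (k J₀)] with i hi
  rintro _ ⟨ε, rfl⟩
  obtain ⟨J, hlt, hle⟩ := hk.exists_forall_lt_and_le_apply i
  have hJ : J₀ ≤ J := hk.le_iff_le.mp (hi.trans_le hle).le
  rw [dist_comm, dist_eq_norm]
  calc ‖cantorPoint n k ε ^ n i - 1‖ ≤ 2 * π * (1 / 2) ^ J :=
        norm_cantorPoint_pow_sub_one_le hpos hdvd hgap hk ε hlt hle
    _ ≤ 2 * π * (1 / 2) ^ J₀ :=
        mul_le_mul_of_nonneg_left (pow_le_pow_of_le_one (by norm_num) (by norm_num) hJ)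
          two_pi_pos.le
    _ < δ := by rwa [lt_div_iff₀' two_pi_pos] at hJ₀

end cantorPoint

theorem exists_perfect_set_of_dvd_and_unbounded_ratio_general
    (n : ℕ → ℕ) (hpos : ∀ k, 0 < n k)
    (hdvd : ∀ k, n k ∣ n (k + 1))
    (hsup : ∀ C : ℝ, ∃ k, C ≤ (n (k + 1) : ℝ) / (n k : ℝ)) :
    ∃ K : Set ℂ, K ⊆ {z : ℂ | ‖z‖ = 1} ∧ IsCompact K ∧ Perfect K ∧ (1 : ℂ) ∈ K ∧
      TendstoUniformlyOn (fun k (z : ℂ) => z ^ (n k)) (fun _ => 1) atTop K := by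
  obtain ⟨k, hk, hratio⟩ := extraction_forall_of_frequently fun j =>
    frequently_atTop_le_of_forall_exists_le hsup (2 ^ (j + 1))
  have hgap : ∀ j, 2 ^ (j + 1) * n (k j) ≤ n (k j + 1) := fun j => by
    exact_mod_cast (le_div_iff₀ (mod_cast hpos (k j))).mp (hratio j)
  have hcompact := isCompact_range (continuous_cantorPoint hpos hgap)
  refine ⟨range (cantorPoint n k), ?_, hcompact, ⟨hcompact.isClosed,
    preperfect_range_cantorPoint hpos hgap⟩, ⟨fun _ => false, ?_⟩,
    tendstoUniformlyOn_pow_range_cantorPoint hpos hdvd hgap hk⟩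
  · rintro _ ⟨ε, rfl⟩
    exact Circle.norm_coe _
  · simp [cantorPoint]

/-- Proposition 3.7: if `n_k ∣ n_{k+1}` for every `k` and `limsup n_{k+1}/n_k = +∞`, there
is a compact perfect subset `K` of the unit circle containing the point `1` such that
`λ^{n_k} → 1` uniformly on `K`. -/
theorem exists_perfect_set_of_dvd_and_unbounded_ratio
    (n : ℕ → ℕ) (hmono : StrictMono n) (hpos : ∀ k, 0 < n k)
    (hdvd : ∀ k, n k ∣ n (k + 1))
    (hsup : ∀ C : ℝ, ∃ k, C ≤ (n (k + 1) : ℝ) / (n k : ℝ)) :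
    ∃ K : Set ℂ, K ⊆ {z : ℂ | ‖z‖ = 1} ∧ IsCompact K ∧ Perfect K ∧ (1 : ℂ) ∈ K ∧
      TendstoUniformlyOn (fun k (z : ℂ) => z ^ (n k)) (fun _ => 1) atTop K :=
  exists_perfect_set_of_dvd_and_unbounded_ratio_general n hpos hdvd hsup
end

section
/- Let (n_k)_{k≥0} be a strictly increasing sequence of positive integers such that n_{k+1}/n_k → ∞ as k → ∞. Then (n_k)_{k≥0} is a rigidity sequence: there exists a continuous (atomless) Borel probability measure σ on 𝕋 such that ∫_𝕋 z^{n_k} dσ(z) → 1 as k → ∞. -/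
/-!
Write `e(t) = exp(2πit)` and, after dropping finitely many terms, assume `4 n_k ≤ n_{k+1}`.
Build a Cantor set along the sequence: a stage-`k` interval has length `2/(3 n_k)` and a left
endpoint `a ∈ n_k⁻¹ℤ`, and its two children are the stage-`(k+1)` intervals with left endpoints
`(⌈n_{k+1} a⌉ + d)/n_{k+1}`, `d ∈ {0, 1}`. Following the binary digits of `x ∈ [0, 1)` through
the nested intervals gives a point `F x`, and `σ` is the image of Lebesgue measure on `[0, 1)`
under `e ∘ F`. Since `F x` lies within `8/(3 n_{k+1})` of the stage-`k` endpoint, `n_k F x` is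
within `(8/3) n_k/n_{k+1} → 0` of an integer, so `e(F x)^{n_k} → 1` and dominated convergence
applies. Siblings are separated by a gap, so `F` is strictly increasing on `[0, 1)` with values
in `[0, 1)`; hence `e ∘ F` is injective there and `σ` has no atoms.
-/

open MeasureTheory Filter Topology Real FourierTransform

theorem norm_fourierChar_pow_sub_one_le (t : ℝ) (n : ℕ) (z : ℤ) :
    ‖(𝐞 t : ℂ) ^ n - 1‖ ≤ 2 * π * |n * t - z| := by
  have hpow : (𝐞 t : ℂ) ^ n = 𝐞 (n * t - z) := by
    rw [← Circle.coe_pow, ← AddChar.map_nsmul_eq_pow, nsmul_eq_mul, fourierChar_apply',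
      fourierChar_apply', mul_sub, Circle.exp_sub, Circle.exp_two_pi_mul_int, div_one]
  rw [hpow, fourierChar_apply, mul_comm]
  calc _ ≤ ‖2 * π * (n * t - z)‖ := norm_exp_I_mul_ofReal_sub_one_le
    _ = _ := by rw [Real.norm_eq_abs, abs_mul, abs_of_pos two_pi_pos]

theorem injOn_fourierChar_Ico : Set.InjOn 𝐞 (Set.Ico 0 1) := by
  intro s hs t ht hst
  have hmaps : Set.MapsTo (fun t : ℝ => 2 * π * t) (Set.Ico 0 1) (Set.Ico 0 (2 * π)) :=
    fun u ⟨h0, h1⟩ => ⟨by positivity, by nlinarith [pi_pos]⟩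
  exact mul_left_cancel₀ two_pi_pos.ne' <|
    Circle.exp_injOn_Ico (by simp) (hmaps hs) (hmaps ht) hst

theorem MeasureTheory.Measure.map_restrict_singleton_eq_zero_of_injOn {α β : Type*}
    [MeasurableSpace α] [MeasurableSpace β] [MeasurableSingletonClass β] {μ : Measure α}
    [NullSingletonClass μ] {f : α → β} {s : Set α} (hf : Measurable f) (hs : s.InjOn f)
    (z : β) : (μ.restrict s).map f {z} = 0 := by
  rw [Measure.map_apply hf (measurableSet_singleton z),
    Measure.restrict_apply (hf (measurableSet_singleton z))]
  exact Set.Subsingleton.measure_zero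
    (fun a ha b hb => hs ha.2 hb.2 (ha.1.trans hb.1.symm)) _

theorem tendsto_integral_pow_map {α : Type*} [MeasurableSpace α] {μ : Measure α}
    [IsProbabilityMeasure μ] {G : α → ℂ} (hG : Measurable G) (hnorm : ∀ x, ‖G x‖ ≤ 1)
    {n : ℕ → ℕ} (h : ∀ x, Tendsto (fun k => G x ^ n k) atTop (𝓝 1)) :
    Tendsto (fun k => ∫ z, z ^ n k ∂μ.map G) atTop (𝓝 1) := by
  simp_rw [integral_map hG.aemeasurable (continuous_pow _).aestronglyMeasurable]
  simpa using tendsto_integral_of_dominated_convergence (fun _ => 1)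
    (fun k => (hG.pow_const _).aestronglyMeasurable) (integrable_const (μ := μ) (1 : ℝ))
    (fun k => ae_of_all _ fun x => by simpa [norm_pow] using pow_le_one₀ (norm_nonneg _) (hnorm x))
    (ae_of_all _ h)

/-- The left endpoint of the stage-`k` interval coded by the binary word `j < 2 ^ k`, whose
last digit is `j % 2`. -/
noncomputable def cantorEndpoint (m : ℕ → ℕ) : ℕ → ℕ → ℝ
  | 0, _ => 0
  | k + 1, j => (⌈m (k + 1) * cantorEndpoint m k (j / 2)⌉ + (j % 2 : ℕ)) / m (k + 1)

/-- `⌊x * 2 ^ k⌋₊` codes the first `k` binary digits of `x ∈ [0, 1)`. -/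
noncomputable def cantorApprox (m : ℕ → ℕ) (k : ℕ) (x : ℝ) : ℝ :=
  cantorEndpoint m k ⌊x * 2 ^ k⌋₊

noncomputable def cantorMap (m : ℕ → ℕ) (x : ℝ) : ℝ := ⨆ k, cantorApprox m k x

namespace cantorEndpoint

variable {m : ℕ → ℕ} (hpos : ∀ k, 0 < m k)
include hpos

theorem exists_int_mul_eq (k j : ℕ) : ∃ z : ℤ, m k * cantorEndpoint m k j = z := by
  cases k with
  | zero => exact ⟨0, by simp [cantorEndpoint]⟩
  | succ k =>
    refine ⟨⌈m (k + 1) * cantorEndpoint m k (j / 2)⌉ + (j % 2 : ℕ), ?_⟩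
    rw [cantorEndpoint, mul_div_cancel₀ _ (by exact_mod_cast (hpos _).ne'), Int.cast_add,
      Int.cast_natCast]

theorem le_succ (k j : ℕ) : cantorEndpoint m k (j / 2) ≤ cantorEndpoint m (k + 1) j := by
  have hmk : (0 : ℝ) < m (k + 1) := by exact_mod_cast hpos _
  rw [cantorEndpoint, le_div_iff₀ hmk, mul_comm]
  exact (Int.le_ceil _).trans (le_add_of_nonneg_right (Nat.cast_nonneg _))

theorem succ_le (k j : ℕ) :
    cantorEndpoint m (k + 1) j ≤ cantorEndpoint m k (j / 2) + 2 / m (k + 1) := by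
  have hmk : (0 : ℝ) < m (k + 1) := by exact_mod_cast hpos _
  have hdigit : ((j % 2 : ℕ) : ℝ) ≤ 1 := by
    exact_mod_cast Nat.le_of_lt_succ (Nat.mod_lt j two_pos)
  rw [cantorEndpoint, div_le_iff₀ hmk, add_mul, div_mul_cancel₀ _ hmk.ne']
  linarith [Int.ceil_lt_add_one ((m (k + 1) : ℝ) * cantorEndpoint m k (j / 2))]

variable (hgrowth : ∀ k, 4 * m k ≤ m (k + 1))
include hgrowth

theorem succ_add_le (k j : ℕ) :
    cantorEndpoint m (k + 1) j + 2 / (3 * m (k + 1)) ≤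
      cantorEndpoint m k (j / 2) + 2 / (3 * m k) := by
  have hmk : (0 : ℝ) < m k := by exact_mod_cast hpos _
  have hmk' : (0 : ℝ) < m (k + 1) := by exact_mod_cast hpos _
  have h4 : 4 * (m k : ℝ) ≤ m (k + 1) := by exact_mod_cast hgrowth k
  have : 2 / m (k + 1) + 2 / (3 * m (k + 1)) ≤ 2 / (3 * (m k : ℝ)) := by
    rw [div_add_div _ _ (by positivity) (by positivity),
      div_le_div_iff₀ (by positivity) (by positivity)]
    nlinarith
  linarith [succ_le hpos k j]

theorem add_le_of_lt (k : ℕ) : ∀ j j', j < j' → j' < 2 ^ k →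
    cantorEndpoint m k j + 1 / m k ≤ cantorEndpoint m k j' := by
  induction k with
  | zero => intro j j' h h'; omega
  | succ k ih =>
    intro j j' h h'
    have hmk : (0 : ℝ) < m k := by exact_mod_cast hpos _
    have hmk' : (0 : ℝ) < m (k + 1) := by exact_mod_cast hpos _
    have h4 : 4 * (m k : ℝ) ≤ m (k + 1) := by exact_mod_cast hgrowth k
    rcases (Nat.div_le_div_right (c := 2) h.le).lt_or_eq with hlt | heq
    · have hparent := ih _ _ hlt (by omega)
      have : 1 / m (k + 1) + 2 / m (k + 1) ≤ 1 / (m k : ℝ) := by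
        rw [← add_div, div_le_div_iff₀ (by positivity) hmk]
        linarith
      linarith [succ_le hpos k j, le_succ hpos k j']
    · have hj : j % 2 = 0 := by omega
      have hj' : j' % 2 = 1 := by omega
      rw [cantorEndpoint, cantorEndpoint, heq, hj, hj', ← add_div]
      push_cast
      rw [add_zero]

end cantorEndpoint

theorem Nat.floor_mul_two_pow_succ_div_two (x : ℝ) (k : ℕ) :
    ⌊x * 2 ^ (k + 1)⌋₊ / 2 = ⌊x * 2 ^ k⌋₊ := by
  rw [← Nat.floor_div_natCast, pow_succ, Nat.cast_ofNat, ← mul_assoc,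
    mul_div_cancel_right₀ _ two_ne_zero]

theorem measurable_cantorApprox (m : ℕ → ℕ) (k : ℕ) : Measurable (cantorApprox m k) :=
  measurable_from_nat.comp (Nat.measurable_floor.comp (measurable_id.mul_const _))

section cantorMap

variable {m : ℕ → ℕ} (hpos : ∀ k, 0 < m k)
include hpos

theorem monotone_cantorApprox (x : ℝ) : Monotone fun k => cantorApprox m k x :=
  monotone_nat_of_le_succ fun k => by
    simpa only [cantorApprox, Nat.floor_mul_two_pow_succ_div_two] using
      cantorEndpoint.le_succ hpos k ⌊x * 2 ^ (k + 1)⌋₊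

variable (hgrowth : ∀ k, 4 * m k ≤ m (k + 1))
include hgrowth

theorem antitone_cantorApprox_add (x : ℝ) :
    Antitone fun k => cantorApprox m k x + 2 / (3 * m k) :=
  antitone_nat_of_succ_le fun k => by
    simpa only [cantorApprox, Nat.floor_mul_two_pow_succ_div_two] using
      cantorEndpoint.succ_add_le hpos hgrowth k ⌊x * 2 ^ (k + 1)⌋₊

theorem cantorApprox_le_cantorApprox_add {x : ℝ} (k l : ℕ) :
    cantorApprox m l x ≤ cantorApprox m k x + 2 / (3 * m k) := by
  have hpos' : (0 : ℝ) < m (max l k) := by exact_mod_cast hpos _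
  calc cantorApprox m l x ≤ cantorApprox m (max l k) x :=
        monotone_cantorApprox hpos x (le_max_left l k)
    _ ≤ cantorApprox m (max l k) x + 2 / (3 * m (max l k)) :=
        le_add_of_nonneg_right (by positivity)
    _ ≤ cantorApprox m k x + 2 / (3 * m k) :=
        antitone_cantorApprox_add hpos hgrowth x (le_max_right l k)

theorem bddAbove_range_cantorApprox (x : ℝ) :
    BddAbove (Set.range fun k => cantorApprox m k x) :=
  ⟨_, Set.forall_mem_range.2 fun l => cantorApprox_le_cantorApprox_add hpos hgrowth 0 l⟩

theorem cantorApprox_le_cantorMap (k : ℕ) (x : ℝ) : cantorApprox m k x ≤ cantorMap m x :=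
  le_ciSup (bddAbove_range_cantorApprox hpos hgrowth x) k

theorem cantorMap_le_cantorApprox_add (k : ℕ) (x : ℝ) :
    cantorMap m x ≤ cantorApprox m k x + 2 / (3 * m k) :=
  ciSup_le fun l => cantorApprox_le_cantorApprox_add hpos hgrowth k l

theorem cantorMap_sub_cantorApprox_le (k : ℕ) (x : ℝ) :
    cantorMap m x - cantorApprox m k x ≤ 8 / (3 * m (k + 1)) := by
  have hstep : cantorApprox m (k + 1) x ≤ cantorApprox m k x + 2 / m (k + 1) := by
    simpa only [cantorApprox, Nat.floor_mul_two_pow_succ_div_two] using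
      cantorEndpoint.succ_le hpos k ⌊x * 2 ^ (k + 1)⌋₊
  have : (2 : ℝ) / m (k + 1) + 2 / (3 * m (k + 1)) = 8 / (3 * m (k + 1)) := by
    have : (m (k + 1) : ℝ) ≠ 0 := by exact_mod_cast (hpos _).ne'
    field_simp; ring
  linarith [cantorMap_le_cantorApprox_add hpos hgrowth (k + 1) x]

theorem cantorMap_mem_Ico (x : ℝ) : cantorMap m x ∈ Set.Ico 0 1 := by
  have h0 : cantorApprox m 0 x = 0 := rfl
  have hm0 : (1 : ℝ) ≤ m 0 := by exact_mod_cast hpos 0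
  refine ⟨h0 ▸ cantorApprox_le_cantorMap hpos hgrowth 0 x, ?_⟩
  calc cantorMap m x ≤ 2 / (3 * m 0) := by
        simpa [h0] using cantorMap_le_cantorApprox_add hpos hgrowth 0 x
    _ < 1 := by rw [div_lt_one (by positivity)]; linarith

theorem strictMonoOn_cantorMap : StrictMonoOn (cantorMap m) (Set.Ico 0 1) := by
  intro x hx y hy hxy
  obtain ⟨k, hk⟩ := pow_unbounded_of_one_lt (1 / (y - x)) one_lt_two
  have h2k : (0 : ℝ) < 2 ^ k := by positivity
  have hgap : x * 2 ^ k + 1 < y * 2 ^ k := by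
    rw [div_lt_iff₀ (sub_pos.2 hxy)] at hk; linarith
  have hlt : ⌊x * 2 ^ k⌋₊ < ⌊y * 2 ^ k⌋₊ := by
    have := Nat.floor_le (mul_nonneg hx.1 h2k.le)
    have := Nat.lt_floor_add_one (y * 2 ^ k)
    exact_mod_cast (show (⌊x * 2 ^ k⌋₊ : ℝ) < ⌊y * 2 ^ k⌋₊ by linarith)
  have hlt' : ⌊y * 2 ^ k⌋₊ < 2 ^ k :=
    (Nat.floor_lt (mul_nonneg hy.1 h2k.le)).2 (by push_cast; nlinarith [hy.2])
  have hsep := cantorEndpoint.add_le_of_lt hpos hgrowth k _ _ hlt hlt'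
  have hmk : (0 : ℝ) < m k := by exact_mod_cast hpos k
  have : 2 / (3 * m k) < 1 / (m k : ℝ) := by
    rw [div_lt_div_iff₀ (by positivity) hmk]; linarith
  calc cantorMap m x ≤ cantorApprox m k x + 2 / (3 * m k) :=
        cantorMap_le_cantorApprox_add hpos hgrowth k x
    _ < cantorApprox m k y := by unfold cantorApprox; linarith
    _ ≤ cantorMap m y := cantorApprox_le_cantorMap hpos hgrowth k y

theorem measurable_cantorMap : Measurable (cantorMap m) :=
  measurable_of_tendsto_metrizable (measurable_cantorApprox m) <| tendsto_pi_nhds.2 fun x =>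
    tendsto_atTop_ciSup (monotone_cantorApprox hpos x) (bddAbove_range_cantorApprox hpos hgrowth x)

theorem norm_fourierChar_cantorMap_pow_sub_one_le (k : ℕ) (x : ℝ) :
    ‖(𝐞 (cantorMap m x) : ℂ) ^ m k - 1‖ ≤ 2 * π * (8 / 3 * (m k / m (k + 1))) := by
  obtain ⟨z, hz⟩ := cantorEndpoint.exists_int_mul_eq hpos k ⌊x * 2 ^ k⌋₊
  have hdiff : (m k : ℝ) * cantorMap m x - z = m k * (cantorMap m x - cantorApprox m k x) := by
    rw [mul_sub, cantorApprox, hz]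
  have hnonneg := sub_nonneg.2 (cantorApprox_le_cantorMap hpos hgrowth k x)
  calc ‖(𝐞 (cantorMap m x) : ℂ) ^ m k - 1‖ ≤ 2 * π * |m k * cantorMap m x - z| :=
        norm_fourierChar_pow_sub_one_le _ _ z
    _ = 2 * π * (m k * (cantorMap m x - cantorApprox m k x)) := by
        rw [hdiff, abs_of_nonneg (by positivity)]
    _ ≤ 2 * π * (m k * (8 / (3 * m (k + 1)))) := by
        gcongr; exact cantorMap_sub_cantorApprox_le hpos hgrowth k x
    _ = 2 * π * (8 / 3 * (m k / m (k + 1))) := by ring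

end cantorMap

theorem exists_continuous_measure_tendsto_integral_pow (m : ℕ → ℕ) (hpos : ∀ k, 0 < m k)
    (hgrowth : ∀ k, 4 * m k ≤ m (k + 1))
    (hratio : Tendsto (fun k => (m (k + 1) : ℝ) / (m k : ℝ)) atTop atTop) :
    ∃ σ : Measure ℂ, IsProbabilityMeasure σ ∧ σ {z : ℂ | ‖z‖ = 1}ᶜ = 0 ∧
      (∀ z : ℂ, σ {z} = 0) ∧
      Tendsto (fun k => ∫ z : ℂ, z ^ (m k) ∂σ) atTop (𝓝 1) := by
  set G : ℝ → ℂ := fun x => 𝐞 (cantorMap m x)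
  have hG : Measurable G := (continuous_subtype_val.comp continuous_fourierChar).measurable.comp
    (measurable_cantorMap hpos hgrowth)
  have : IsProbabilityMeasure (volume.restrict (Set.Ico (0 : ℝ) 1)) := ⟨by simp⟩
  refine ⟨(volume.restrict (Set.Ico 0 1)).map G,
    Measure.isProbabilityMeasure_map hG.aemeasurable, ?_, ?_, ?_⟩
  · rw [Measure.map_apply hG (measurableSet_eq_fun measurable_norm measurable_const).compl]
    simp [G, Circle.norm_coe]
  · exact Measure.map_restrict_singleton_eq_zero_of_injOn hG <| Subtype.val_injective.comp_injOn <|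
      injOn_fourierChar_Ico.comp (strictMonoOn_cantorMap hpos hgrowth).injOn
        fun x _ => cantorMap_mem_Ico hpos hgrowth x
  refine tendsto_integral_pow_map hG (fun x => (Circle.norm_coe _).le) fun x => ?_
  have hbound : Tendsto (fun k => 2 * π * (8 / 3 * ((m k : ℝ) / m (k + 1)))) atTop (𝓝 0) := by
    simpa using (hratio.inv_tendsto_atTop.const_mul (8 / 3)).const_mul (2 * π)
  exact tendsto_iff_norm_sub_tendsto_zero.2 <| squeeze_zero (fun _ => norm_nonneg _)
    (norm_fourierChar_cantorMap_pow_sub_one_le hpos hgrowth · x) hbound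

theorem rigidity_sequence_of_ratio_tendsto_atTop_general
    (n : ℕ → ℕ) (hpos : ∀ k, 0 < n k)
    (hratio : Tendsto (fun k => (n (k + 1) : ℝ) / (n k : ℝ)) atTop atTop) :
    ∃ σ : Measure ℂ, IsProbabilityMeasure σ ∧ σ {z : ℂ | ‖z‖ = 1}ᶜ = 0 ∧
      (∀ z : ℂ, σ {z} = 0) ∧
      Tendsto (fun k => ∫ z : ℂ, z ^ (n k) ∂σ) atTop (𝓝 1) := by
  obtain ⟨K, hK⟩ := (hratio.eventually_ge_atTop 4).exists_forall_of_atTop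
  have hshift : Tendsto (fun k => (n (k + K + 1) : ℝ) / n (k + K)) atTop atTop :=
    hratio.comp (tendsto_add_atTop_nat K)
  have hgrowth (k : ℕ) : 4 * n (k + K) ≤ n (k + K + 1) := by
    have h := hK (k + K) le_add_self
    rw [le_div_iff₀ (by exact_mod_cast hpos _)] at h
    exact_mod_cast h
  obtain ⟨σ, hprob, hcircle, hatoms, hlim⟩ :=
    exists_continuous_measure_tendsto_integral_pow (fun k => n (k + K)) (fun k => hpos _)
      (by simpa only [Nat.add_right_comm] using hgrowth)
      (by simpa only [Nat.add_right_comm] using hshift)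
  exact ⟨σ, hprob, hcircle, hatoms, (tendsto_add_atTop_iff_nat K).1 hlim⟩

/-- Example 3.3: if `n_{k+1}/n_k → ∞`, then `(n_k)` is a rigidity sequence: there is a
continuous (atomless) probability measure `σ` on the unit circle such that
`∫ z^{n_k} dσ(z) → 1`. -/
theorem rigidity_sequence_of_ratio_tendsto_atTop
    (n : ℕ → ℕ) (hmono : StrictMono n) (hpos : ∀ k, 0 < n k)
    (hratio : Tendsto (fun k => (n (k + 1) : ℝ) / (n k : ℝ)) atTop atTop) :
    ∃ σ : Measure ℂ, IsProbabilityMeasure σ ∧ σ {z : ℂ | ‖z‖ = 1}ᶜ = 0 ∧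
      (∀ z : ℂ, σ {z} = 0) ∧
      Tendsto (fun k => ∫ z : ℂ, z ^ (n k) ∂σ) atTop (𝓝 1) :=
  rigidity_sequence_of_ratio_tendsto_atTop_general n hpos hratio
end
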